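/- arXiv:1012.2467 — 2 statements merged into one kernel-verified Lean document; each statement's English description precedes it below -/
import Mathlib

section
/- Let K be a commutative ring and let (C^i)_{i∈ℤ} be a family of K-modules equipped with K-linear maps d : C^i → C^{i+1} and Δ : C^i → C^{i−1} satisfying d∘d = 0, Δ∘Δ = 0 and d∘Δ + Δ∘d = 0. For each integer k define T^k := ∏_{p≥0} C^{k−2p}, and D : T^k → T^{k+1} by (Dc)_p := d(c_p) + Δ(c_{p−1}) (with c_{−1} := 0). Assume H^i(C,d) = 0 for every i < 0. If c ∈ T⁰ satisfies Dc = 0 and its zeroth component c₀ ∈ C⁰ is d-exact (c₀ = d(b) for some b ∈ C^{−1}), then c is a D-boundary: there exists β ∈ T^{−1} with Dβ = c. -/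
/-- The total differential `D` on `T^k = ∏_{p ≥ 0} C^{k-2p}` (the degree-`k` component of
`C[[ℏ]]` with `ℏ` of degree 2), given by `(Dc)_p = d(c_p) + Δ(c_{p-1})` with `c_{-1} = 0`. -/
def totalDiff {K M : Type*} [CommRing K] [AddCommGroup M] [Module K M]
    (d Δ : M →ₗ[K] M) (c : ℕ → M) : ℕ → M
  | 0 => d (c 0)
  | p + 1 => d (c (p + 1)) + Δ (c p)

/-- Let `(C i)_{i ∈ ℤ}` be a family of `K`-modules (realized as submodules of
an ambient module `M`) with operators `d` (degree `+1`) and `Δ` (degree `-1`) satisfying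
`d² = 0`, `Δ² = 0`, `dΔ + Δd = 0`, and let `T^k := ∏_{p ≥ 0} C^{k-2p}` with differential
`(Dc)_p := d(c_p) + Δ(c_{p-1})` (where `c_{-1} := 0`).  Assume `H^i(C,d) = 0` for all `i < 0`.
If `c ∈ T⁰` satisfies `Dc = 0` and its zeroth component `c₀ ∈ C⁰` is `d`-exact
(`c₀ = d b` for some `b ∈ C^{-1}`), then `c` is a `D`-boundary: there is `β ∈ T^{-1}` with
`Dβ = c`. -/
theorem grt_bv_stmt3 {K M : Type*} [CommRing K] [AddCommGroup M] [Module K M]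
    (C : ℤ → Submodule K M) (d Δ : M →ₗ[K] M)
    (hd : ∀ i : ℤ, ∀ x ∈ C i, d x ∈ C (i + 1))
    (hΔ : ∀ i : ℤ, ∀ x ∈ C i, Δ x ∈ C (i - 1))
    (hdd : ∀ x : M, d (d x) = 0)
    (hΔΔ : ∀ x : M, Δ (Δ x) = 0)
    (hanti : ∀ x : M, d (Δ x) + Δ (d x) = 0)
    (hvanish : ∀ i : ℤ, i < 0 → ∀ x ∈ C i, d x = 0 → ∃ y ∈ C (i - 1), d y = x)
    (c : ℕ → M) (hc : ∀ p : ℕ, c p ∈ C (-(2 * (p : ℤ))))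
    (hcycle : ∀ p : ℕ, totalDiff d Δ c p = 0)
    (b : M) (hb : b ∈ C (-1 : ℤ)) (hexact : c 0 = d b) :
    ∃ β : ℕ → M, (∀ p : ℕ, β p ∈ C (-1 - 2 * (p : ℤ))) ∧
      ∀ p : ℕ, totalDiff d Δ β p = c p := by
  classical
  have step : ∀ (p : ℕ) (x : M), x ∈ C (-1 - 2 * (p : ℤ)) → Δ (d x) = Δ (c p) →
      ∃ y : M, y ∈ C (-1 - 2 * (((p + 1 : ℕ)) : ℤ)) ∧ Δ (d y) = Δ (c (p + 1)) ∧
        d y + Δ x = c (p + 1) := by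
    intro p x hx hΔdx
    set z : M := c (p + 1) - Δ x with hz
    have hzmem : z ∈ C (-(2 * ((p : ℤ) + 1))) := by
      have h1 : c (p + 1) ∈ C (-(2 * (((p : ℕ) + 1 : ℕ) : ℤ))) := hc (p + 1)
      have h2 : Δ x ∈ C (-1 - 2 * (p : ℤ) - 1) := hΔ _ x hx
      have e1 : (-(2 * (((p : ℕ) + 1 : ℕ) : ℤ))) = -(2 * ((p : ℤ) + 1)) := by push_cast; ring
      have e2 : (-1 - 2 * (p : ℤ) - 1) = -(2 * ((p : ℤ) + 1)) := by ring
      rw [e1] at h1; rw [e2] at h2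
      exact sub_mem h1 h2
    have hdz : d z = 0 := by
      have h1 : d (c (p + 1)) + Δ (c p) = 0 := hcycle (p + 1)
      have h2 : d (Δ x) + Δ (d x) = 0 := hanti x
      have hdc : d (c (p + 1)) = -Δ (c p) := by
        rw [eq_neg_iff_add_eq_zero]; exact h1
      have hdΔ : d (Δ x) = -Δ (c p) := by
        rw [eq_neg_iff_add_eq_zero, ← hΔdx]; exact h2
      rw [hz, map_sub, hdc, hdΔ, sub_neg_eq_add, neg_add_cancel]
    obtain ⟨y, hy, hdy⟩ := hvanish (-(2 * ((p : ℤ) + 1)))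
      (by omega) z hzmem hdz
    refine ⟨y, ?_, ?_, ?_⟩
    · have e : (-(2 * ((p : ℤ) + 1)) - 1) = -1 - 2 * (((p + 1 : ℕ)) : ℤ) := by
        push_cast; ring
      rwa [e] at hy
    · rw [hdy, hz, map_sub, hΔΔ, sub_zero]
    · rw [hdy, hz]; abel
  choose F hF1 hF2 hF3 using step
  let g : ∀ p : ℕ, {x : M // x ∈ C (-1 - 2 * (p : ℤ)) ∧ Δ (d x) = Δ (c p)} := fun p =>
    Nat.rec
      ⟨b, by norm_num; exact hb, by rw [hexact]⟩
      (fun n ih => ⟨F n ih.1 ih.2.1 ih.2.2, hF1 n ih.1 ih.2.1 ih.2.2,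
        hF2 n ih.1 ih.2.1 ih.2.2⟩) p
  refine ⟨fun p => (g p).1, fun p => (g p).2.1, fun p => ?_⟩
  cases p with
  | zero =>
    show d ((g 0).1) = c 0
    show d b = c 0
    exact hexact.symm
  | succ n =>
    show d ((g (n + 1)).1) + Δ ((g n).1) = c (n + 1)
    exact hF3 n (g n).1 (g n).2.1 (g n).2.2
end

section
/- Let K be a commutative ring and V a K-module. For n, m ≥ 1, a a K-multilinear map V^n → V, b a K-multilinear map V^m → V, and 1 ≤ i ≤ n, let a∘ᵢb denote the K-multilinear map V^{n+m−1} → V given by (a∘ᵢb)(v₁,…,v_{n+m−1}) = a(v₁,…,v_{i−1}, b(vᵢ,…,v_{i+m−1}), v_{i+m},…,v_{n+m−1}). Define on the direct sum L := ⊕_{n≥1} MultilinearMap(V^n, V) the bracket [a,b] := Σ_{i=1}^{n} a∘ᵢb − Σ_{j=1}^{m} b∘ⱼa (extended bilinearly). Then this bracket makes L into a Lie algebra over K: it is K-bilinear, satisfies [a,a] = 0, and satisfies the Jacobi identity. -/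
open Finset

/-- The space of `K`-multilinear maps `V^{n+1} → V` (so every arity `n + 1 ≥ 1` occurs). -/
abbrev MArity (K V : Type*) [CommRing K] [AddCommGroup V] [Module K V] (n : ℕ) :=
  MultilinearMap K (fun _ : Fin (n + 1) => V) V

section Insertion

variable {K V : Type*} [CommRing K] [AddCommGroup V] [Module K V] {n m : ℕ}

/-- The assembly of arguments for the partial composition `a ∘ᵢ b`:  given
`v = (v₁, …, v_{n+m+1})`, the `i`-th argument of `a` is `b (vᵢ, …, v_{i+m})`, the arguments
before it are `v₁, …, v_{i-1}` and the arguments after it are `v_{i+m+1}, …, v_{n+m+1}`. -/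
def splice (b : MArity K V m) (i : Fin (n + 1)) (v : Fin (n + m + 1) → V)
    (k : Fin (n + 1)) : V :=
  if (k : ℕ) < (i : ℕ) then v ⟨k, by have := k.isLt; omega⟩
  else if (k : ℕ) = (i : ℕ) then
    b fun j => v ⟨(i : ℕ) + (j : ℕ), by have := i.isLt; have := j.isLt; omega⟩
  else v ⟨(k : ℕ) + m, by have := k.isLt; omega⟩

lemma splice_update_lt (b : MArity K V m) (i : Fin (n + 1)) (v : Fin (n + m + 1) → V)
    (t : Fin (n + m + 1)) (ht : (t : ℕ) < (i : ℕ)) (z : V) :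
    splice b i (Function.update v t z)
      = Function.update (splice b i v) ⟨t, by have := i.isLt; omega⟩ z := by
  funext k
  rw [Function.update_apply]
  by_cases hk : k = (⟨t, by have := i.isLt; omega⟩ : Fin (n+1))
  · subst hk
    simp only [splice]
    rw [if_pos (by simpa using ht)]
    simp [Function.update_apply]
  · have hk' : (k : ℕ) ≠ (t : ℕ) := by
      intro h; apply hk; ext; simpa using h
    rw [if_neg hk]
    simp only [splice]
    by_cases h1 : (k : ℕ) < (i : ℕ)
    · rw [if_pos h1, if_pos h1, Function.update_apply, if_neg (by simp [Fin.ext_iff]; omega)]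
    · rw [if_neg h1, if_neg h1]
      by_cases h2 : (k : ℕ) = (i : ℕ)
      · rw [if_pos h2, if_pos h2]
        congr 1
        funext j
        rw [Function.update_apply, if_neg (by simp [Fin.ext_iff]; omega)]
      · rw [if_neg h2, if_neg h2, Function.update_apply,
          if_neg (by simp [Fin.ext_iff]; omega)]

lemma splice_update_mid (b : MArity K V m) (i : Fin (n + 1)) (v : Fin (n + m + 1) → V)
    (t : Fin (n + m + 1)) (ht1 : (i : ℕ) ≤ (t : ℕ)) (ht2 : (t : ℕ) ≤ (i : ℕ) + m) (z : V) :
    splice b i (Function.update v t z)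
      = Function.update (splice b i v) i
          (b (Function.update
            (fun j : Fin (m + 1) =>
              v ⟨(i : ℕ) + (j : ℕ), by have := i.isLt; have := j.isLt; omega⟩)
            ⟨(t : ℕ) - (i : ℕ), by omega⟩ z)) := by
  funext k
  rw [Function.update_apply]
  by_cases hk : k = i
  · subst hk
    simp only [splice, lt_irrefl, if_false, if_neg (lt_irrefl _), if_pos rfl, if_true]
    congr 1
    funext j
    rw [Function.update_apply, Function.update_apply]
    by_cases hj : (j : ℕ) = (t : ℕ) - (k : ℕ)
    · rw [if_pos (show (⟨(k : ℕ) + (j : ℕ), by have := k.isLt; have := j.isLt; omega⟩ :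
          Fin (n + m + 1)) = t by simp [Fin.ext_iff]; omega),
        if_pos (by simp [Fin.ext_iff]; omega)]
    · rw [if_neg (by simp [Fin.ext_iff]; omega), if_neg (by simp [Fin.ext_iff]; omega)]
  · rw [if_neg hk]
    have hk' : (k : ℕ) ≠ (i : ℕ) := by
      intro h; exact hk (by ext; simpa using h)
    simp only [splice]
    by_cases h1 : (k : ℕ) < (i : ℕ)
    · rw [if_pos h1, if_pos h1, Function.update_apply, if_neg (by simp [Fin.ext_iff]; omega)]
    · rw [if_neg h1, if_neg h1, if_neg hk', if_neg hk', Function.update_apply,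
        if_neg (by simp [Fin.ext_iff]; have := k.isLt; omega)]

lemma splice_update_gt (b : MArity K V m) (i : Fin (n + 1)) (v : Fin (n + m + 1) → V)
    (t : Fin (n + m + 1)) (ht : (i : ℕ) + m < (t : ℕ)) (z : V) :
    splice b i (Function.update v t z)
      = Function.update (splice b i v) ⟨(t : ℕ) - m, by have := t.isLt; omega⟩ z := by
  funext k
  rw [Function.update_apply]
  by_cases hk : k = (⟨(t : ℕ) - m, by have := t.isLt; omega⟩ : Fin (n + 1))
  · subst hk
    rw [if_pos rfl]
    simp only [splice, Fin.val_mk]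
    rw [if_neg (by omega), if_neg (by omega), Function.update_apply,
      if_pos (by simp [Fin.ext_iff]; omega)]
  · have hk' : (k : ℕ) ≠ (t : ℕ) - m := by
      intro h; exact hk (by ext; simpa using h)
    rw [if_neg hk]
    simp only [splice]
    by_cases h1 : (k : ℕ) < (i : ℕ)
    · rw [if_pos h1, if_pos h1, Function.update_apply, if_neg (by simp [Fin.ext_iff]; omega)]
    · rw [if_neg h1, if_neg h1]
      by_cases h2 : (k : ℕ) = (i : ℕ)
      · rw [if_pos h2, if_pos h2]
        congr 1
        funext j
        rw [Function.update_apply, if_neg (by simp [Fin.ext_iff]; have := j.isLt; omega)]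
      · rw [if_neg h2, if_neg h2, Function.update_apply,
          if_neg (by simp [Fin.ext_iff]; omega)]

/-- The operadic partial composition `a ∘ᵢ b` of multilinear maps: insert the output of
`b : V^{m+1} → V` into the `i`-th argument of `a : V^{n+1} → V`, getting a multilinear map
`V^{(n+1)+(m+1)-1} = V^{n+m+1} → V`, i.e.
`(a ∘ᵢ b)(v₁,…,v_{n+m+1}) = a (v₁, …, v_{i-1}, b (vᵢ, …, v_{i+m}), v_{i+m+1}, …, v_{n+m+1})`. -/
def insertComp (a : MArity K V n) (b : MArity K V m) (i : Fin (n + 1)) :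
    MArity K V (n + m) where
  toFun v := a (splice b i v)
  map_update_add' := by
    intro dec v t x y
    obtain rfl := Subsingleton.elim dec (instDecidableEqFin _)
    by_cases ht1 : (t : ℕ) < (i : ℕ)
    · simp only [splice_update_lt b i v t ht1]
      exact a.map_update_add _ _ _ _
    · by_cases ht2 : (t : ℕ) ≤ (i : ℕ) + m
      · simp only [splice_update_mid b i v t (by omega) ht2]
        rw [b.map_update_add]
        exact a.map_update_add _ _ _ _
      · simp only [splice_update_gt b i v t (by omega)]
        exact a.map_update_add _ _ _ _
  map_update_smul' := by
    intro dec v t c x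
    obtain rfl := Subsingleton.elim dec (instDecidableEqFin _)
    by_cases ht1 : (t : ℕ) < (i : ℕ)
    · simp only [splice_update_lt b i v t ht1]
      exact a.map_update_smul _ _ _ _
    · by_cases ht2 : (t : ℕ) ≤ (i : ℕ) + m
      · simp only [splice_update_mid b i v t (by omega) ht2]
        rw [b.map_update_smul]
        exact a.map_update_smul _ _ _ _
      · simp only [splice_update_gt b i v t (by omega)]
        exact a.map_update_smul _ _ _ _

/-- The Kapranov–Manin bracket of homogeneous elements:
`[a, b] := Σ_{i=1}^{n+1} a ∘ᵢ b − Σ_{j=1}^{m+1} b ∘ⱼ a`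
(the second sum is transported along the canonical identification `V^{m+n+1} = V^{n+m+1}`). -/
def bracketHomog {K V : Type*} [CommRing K] [AddCommGroup V] [Module K V] {n m : ℕ}
    (a : MArity K V n) (b : MArity K V m) : MArity K V (n + m) :=
  (∑ i : Fin (n + 1), insertComp a b i) -
    MultilinearMap.domDomCongr (finCongr (by omega : m + n + 1 = n + m + 1))
      (∑ j : Fin (m + 1), insertComp b a j)

/-- The direct sum `L = ⊕_{n ≥ 1} MultilinearMap(V^n, V)`; the summand of index `n : ℕ`
consists of the multilinear maps of arity `n + 1`. -/
abbrev GradedEnd (K V : Type*) [CommRing K] [AddCommGroup V] [Module K V] :=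
  DirectSum ℕ (fun n => MArity K V n)

open Classical in
/-- The Kapranov–Manin bracket, extended bilinearly to the direct sum
`L = ⊕_{n ≥ 1} MultilinearMap(V^n, V)`. -/
noncomputable def bracketTotal {K V : Type*} [CommRing K] [AddCommGroup V] [Module K V]
    (x y : GradedEnd K V) : GradedEnd K V :=
  DFinsupp.sum x fun n a => DFinsupp.sum y fun m b =>
    DirectSum.of (fun n => MArity K V n) (n + m) (bracketHomog a b)

end Insertion

section KeyLemmas

variable {K V : Type*} [CommRing K] [AddCommGroup V] [Module K V] {n m p : ℕ}

@[simp] lemma insertComp_apply (a : MArity K V n) (b : MArity K V m) (i : Fin (n + 1))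
    (v : Fin (n + m + 1) → V) : insertComp a b i v = a (splice b i v) := rfl

lemma splice_eq_update (b c : MArity K V m) (i : Fin (n + 1)) (v : Fin (n + m + 1) → V) :
    splice c i v = Function.update (splice b i v) i
      (c fun j => v ⟨(i : ℕ) + (j : ℕ), by have := i.isLt; have := j.isLt; omega⟩) := by
  funext k
  rw [Function.update_apply]
  by_cases hk : k = i
  · subst hk; rw [if_pos rfl]; simp [splice]
  · rw [if_neg hk]
    have hk' : (k : ℕ) ≠ (i : ℕ) := fun h => hk (Fin.ext h)
    simp only [splice, if_neg hk']

lemma splice_self_update (b : MArity K V m) (i : Fin (n + 1)) (v : Fin (n + m + 1) → V) :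
    Function.update (splice b i v) i
      (b fun j => v ⟨(i : ℕ) + (j : ℕ), by have := i.isLt; have := j.isLt; omega⟩)
      = splice b i v := by
  have : (b fun j => v ⟨(i : ℕ) + (j : ℕ), by have := i.isLt; have := j.isLt; omega⟩)
      = splice b i v i := by simp [splice]
  rw [this, Function.update_eq_self]

lemma insertComp_add_left (a a' : MArity K V n) (b : MArity K V m) (i : Fin (n + 1)) :
    insertComp (a + a') b i = insertComp a b i + insertComp a' b i := by
  ext v; simp

lemma insertComp_smul_left (r : K) (a : MArity K V n) (b : MArity K V m) (i : Fin (n + 1)) :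
    insertComp (r • a) b i = r • insertComp a b i := by
  ext v; simp

lemma insertComp_add_right (a : MArity K V n) (b b' : MArity K V m) (i : Fin (n + 1)) :
    insertComp a (b + b') i = insertComp a b i + insertComp a b' i := by
  ext v
  simp only [insertComp_apply, MultilinearMap.add_apply]
  rw [splice_eq_update b (b + b') i v, splice_eq_update b b' i v,
    MultilinearMap.add_apply, a.map_update_add, splice_self_update]

lemma insertComp_smul_right (r : K) (a : MArity K V n) (b : MArity K V m) (i : Fin (n + 1)) :
    insertComp a (r • b) i = r • insertComp a b i := by
  ext v
  simp only [insertComp_apply, MultilinearMap.smul_apply]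
  rw [splice_eq_update b (r • b) i v, MultilinearMap.smul_apply, a.map_update_smul,
    splice_self_update]

end KeyLemmas

section KeyLemmas2

variable {K V : Type*} [CommRing K] [AddCommGroup V] [Module K V] {n m p : ℕ}

/-- The pre-Lie product `a ∘ b = Σᵢ a ∘ᵢ b`. -/
def preComp (a : MArity K V n) (b : MArity K V m) : MArity K V (n + m) :=
  ∑ i : Fin (n + 1), insertComp a b i

/-- `insertComp` bundled as an additive monoid hom in the left argument. -/
def insertCompLhom (b : MArity K V m) (i : Fin (n + 1)) :
    MArity K V n →+ MArity K V (n + m) where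
  toFun a := insertComp a b i
  map_zero' := by ext v; simp
  map_add' a a' := insertComp_add_left a a' b i

/-- `insertComp` bundled as an additive monoid hom in the right argument. -/
def insertCompRhom (a : MArity K V n) (i : Fin (n + 1)) :
    MArity K V m →+ MArity K V (n + m) where
  toFun b := insertComp a b i
  map_zero' := by
    show insertComp a 0 i = 0
    have h0 : (0 : MArity K V m) = (0 : K) • (0 : MArity K V m) := by simp
    rw [h0, insertComp_smul_right]; simp
  map_add' b b' := insertComp_add_right a b b' i

lemma insertComp_sum_left {ι : Type*} (s : Finset ι) (f : ι → MArity K V n)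
    (b : MArity K V m) (i : Fin (n + 1)) :
    insertComp (∑ t ∈ s, f t) b i = ∑ t ∈ s, insertComp (f t) b i :=
  map_sum (insertCompLhom b i) f s

lemma insertComp_sum_right {ι : Type*} (s : Finset ι) (a : MArity K V n)
    (g : ι → MArity K V m) (i : Fin (n + 1)) :
    insertComp a (∑ t ∈ s, g t) i = ∑ t ∈ s, insertComp a (g t) i :=
  map_sum (insertCompRhom a i) g s

lemma of_congr {q q' : ℕ} (h : q = q') (f : MArity K V q) (g : MArity K V q')
    (hfg : ∀ v : Fin (q' + 1) → V, f (fun t => v (Fin.cast (by omega) t)) = g v) :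
    DirectSum.of (fun k => MArity K V k) q f = DirectSum.of (fun k => MArity K V k) q' g := by
  subst h
  congr 1
  ext v
  simpa using hfg v

end KeyLemmas2

section KeyLemmas3

variable {K V : Type*} [CommRing K] [AddCommGroup V] [Module K V] {n m p : ℕ}

lemma of_mid (a : MArity K V n) (b : MArity K V m) (c : MArity K V p)
    (i : Fin (n + 1)) (j : Fin (n + m + 1)) (hj1 : (i : ℕ) ≤ (j : ℕ))
    (hj2 : (j : ℕ) ≤ (i : ℕ) + m) :
    DirectSum.of (fun q => MArity K V q) (n + m + p)
      (insertComp (insertComp a b i) c j)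
    = DirectSum.of (fun q => MArity K V q) (n + (m + p))
      (insertComp a (insertComp b c ⟨(j : ℕ) - (i : ℕ), by omega⟩) i) := by
  apply of_congr (by omega)
  intro v
  simp only [insertComp_apply]
  congr 1
  funext s
  simp only [splice, insertComp_apply]
  split_ifs <;>
    first
      | rfl
      | omega
      | (exact congrArg v (by simp only [Fin.ext_iff, Fin.coe_cast, Fin.val_mk]; omega))
      | (congr 1; funext t; (try simp only [splice, insertComp_apply, Fin.val_mk]); split_ifs <;>
          first
            | rfl
            | omega
            | (exact congrArg v (by simp only [Fin.ext_iff, Fin.coe_cast, Fin.val_mk]; omega))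
            | (congr 1; funext r
               first
                  | rfl
                  | (exact congrArg v
                      (by simp only [Fin.ext_iff, Fin.coe_cast, Fin.val_mk]; omega))))

end KeyLemmas3

section KeyLemmas4

variable {K V : Type*} [CommRing K] [AddCommGroup V] [Module K V] {n m p : ℕ}

lemma of_low (a : MArity K V n) (b : MArity K V m) (c : MArity K V p)
    (i : Fin (n + 1)) (j : Fin (n + m + 1)) (hj : (j : ℕ) < (i : ℕ)) :
    DirectSum.of (fun q => MArity K V q) (n + m + p)
      (insertComp (insertComp a b i) c j)
    = DirectSum.of (fun q => MArity K V q) (n + p + m)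
      (insertComp (insertComp a c ⟨(j : ℕ), by have := i.isLt; omega⟩)
        b ⟨(i : ℕ) + p, by have := i.isLt; omega⟩) := by
  apply of_congr (by omega)
  intro v
  simp only [insertComp_apply]
  congr 1
  funext s
  simp only [splice, insertComp_apply, Fin.val_mk]
  split_ifs <;>
    first
      | rfl
      | omega
      | (exact congrArg v (by simp only [Fin.ext_iff, Fin.coe_cast, Fin.val_mk]; omega))
      | (congr 1; funext t; (try simp only [splice, insertComp_apply, Fin.val_mk]); split_ifs <;>
          first
            | rfl
            | omega
            | (exact congrArg v (by simp only [Fin.ext_iff, Fin.coe_cast, Fin.val_mk]; omega))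
            | (congr 1; funext r
               first
                  | rfl
                  | (exact congrArg v
                      (by simp only [Fin.ext_iff, Fin.coe_cast, Fin.val_mk]; omega))))

lemma of_high (a : MArity K V n) (b : MArity K V m) (c : MArity K V p)
    (i : Fin (n + 1)) (j : Fin (n + m + 1)) (hj : (i : ℕ) + m < (j : ℕ)) :
    DirectSum.of (fun q => MArity K V q) (n + m + p)
      (insertComp (insertComp a b i) c j)
    = DirectSum.of (fun q => MArity K V q) (n + p + m)
      (insertComp (insertComp a c ⟨(j : ℕ) - m, by have := j.isLt; omega⟩)
        b ⟨(i : ℕ), by have := i.isLt; omega⟩) := by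
  apply of_congr (by omega)
  intro v
  simp only [insertComp_apply]
  congr 1
  funext s
  simp only [splice, insertComp_apply, Fin.val_mk]
  split_ifs <;>
    first
      | rfl
      | omega
      | (exact congrArg v (by simp only [Fin.ext_iff, Fin.coe_cast, Fin.val_mk]; omega))
      | (congr 1; funext t; (try simp only [splice, insertComp_apply, Fin.val_mk]); split_ifs <;>
          first
            | rfl
            | omega
            | (exact congrArg v (by simp only [Fin.ext_iff, Fin.coe_cast, Fin.val_mk]; omega))
            | (congr 1; funext r
               first
                  | rfl
                  | (exact congrArg v
                      (by simp only [Fin.ext_iff, Fin.coe_cast, Fin.val_mk]; omega))))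

end KeyLemmas4

section KeyLemmas5

variable {K V : Type*} [CommRing K] [AddCommGroup V] [Module K V] {n m p : ℕ}

/-- Sum of the "low" double insertions: the `c`-slot strictly before the `b`-slot. -/
noncomputable def Lsum (a : MArity K V n) (b : MArity K V m) (c : MArity K V p) :
    GradedEnd K V :=
  ∑ q ∈ Finset.univ.filter
      (fun q : Fin (n + 1) × Fin (n + m + 1) => (q.2 : ℕ) < (q.1 : ℕ)),
    DirectSum.of (fun k => MArity K V k) (n + m + p) (insertComp (insertComp a b q.1) c q.2)

/-- Sum of the "high" double insertions: the `c`-slot strictly after the `b`-block. -/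
noncomputable def Hsum (a : MArity K V n) (b : MArity K V m) (c : MArity K V p) :
    GradedEnd K V :=
  ∑ q ∈ Finset.univ.filter
      (fun q : Fin (n + 1) × Fin (n + m + 1) => (q.1 : ℕ) + m < (q.2 : ℕ)),
    DirectSum.of (fun k => MArity K V k) (n + m + p) (insertComp (insertComp a b q.1) c q.2)

lemma mid_sum (a : MArity K V n) (b : MArity K V m) (c : MArity K V p) :
    ∑ q ∈ Finset.univ.filter
        (fun q : Fin (n + 1) × Fin (n + m + 1) =>
          ¬ (q.2 : ℕ) < (q.1 : ℕ) ∧ (q.2 : ℕ) ≤ (q.1 : ℕ) + m),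
      DirectSum.of (fun k => MArity K V k) (n + m + p) (insertComp (insertComp a b q.1) c q.2)
    = DirectSum.of (fun k => MArity K V k) (n + (m + p)) (preComp a (preComp b c)) := by
  have h2 : DirectSum.of (fun k => MArity K V k) (n + (m + p)) (preComp a (preComp b c))
      = ∑ r : Fin (n + 1) × Fin (m + 1),
          DirectSum.of (fun k => MArity K V k) (n + (m + p))
            (insertComp a (insertComp b c r.2) r.1) := by
    simp only [preComp, insertComp_sum_right, map_sum]
    rw [← Finset.univ_product_univ, Finset.sum_product]
  rw [h2]
  refine Finset.sum_nbij'
    (fun q => (q.1, ⟨min ((q.2 : ℕ) - (q.1 : ℕ)) m, by omega⟩))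
    (fun r => (r.1, ⟨(r.1 : ℕ) + (r.2 : ℕ), by have := r.1.isLt; have := r.2.isLt; omega⟩))
    (fun q hq => Finset.mem_univ _) (fun r hr => ?_) (fun q hq => ?_) (fun r hr => ?_)
    (fun q hq => ?_)
  · simp only [Finset.mem_filter, Finset.mem_univ, true_and]
    have := r.1.isLt; have := r.2.isLt
    (try dsimp only); omega
  · simp only [Finset.mem_filter, Finset.mem_univ, true_and] at hq
    refine Prod.ext rfl (Fin.ext ?_)
    (try dsimp only); omega
  · refine Prod.ext rfl (Fin.ext ?_)
    have := r.2.isLt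
    (try dsimp only); omega
  · simp only [Finset.mem_filter, Finset.mem_univ, true_and] at hq
    have hmin : (⟨min ((q.2 : ℕ) - (q.1 : ℕ)) m, by omega⟩ : Fin (m + 1))
        = ⟨(q.2 : ℕ) - (q.1 : ℕ), by omega⟩ := Fin.ext (by (try dsimp only); omega)
    (try dsimp only)
    rw [hmin]
    exact of_mid a b c q.1 q.2 (by omega) (by omega)

lemma Lsum_eq_Hsum (a : MArity K V n) (b : MArity K V m) (c : MArity K V p) :
    Lsum a b c = Hsum a c b := by
  unfold Lsum Hsum
  refine Finset.sum_nbij'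
    (fun q => (⟨min (q.2 : ℕ) n, by omega⟩, ⟨(q.1 : ℕ) + p, by have := q.1.isLt; omega⟩))
    (fun r => (⟨(r.2 : ℕ) - p, by have := r.2.isLt; omega⟩,
      ⟨(r.1 : ℕ), by have := r.1.isLt; omega⟩))
    (fun q hq => ?_) (fun r hr => ?_) (fun q hq => ?_) (fun r hr => ?_) (fun q hq => ?_)
  · simp only [Finset.mem_filter, Finset.mem_univ, true_and] at hq ⊢
    (try dsimp only); omega
  · simp only [Finset.mem_filter, Finset.mem_univ, true_and] at hr ⊢
    (try dsimp only); omega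
  · simp only [Finset.mem_filter, Finset.mem_univ, true_and] at hq
    have h1 := q.1.isLt
    refine Prod.ext (Fin.ext ?_) (Fin.ext ?_) <;> ((try dsimp only); omega)
  · simp only [Finset.mem_filter, Finset.mem_univ, true_and] at hr
    have h1 := r.1.isLt; have h2 := r.2.isLt
    refine Prod.ext (Fin.ext ?_) (Fin.ext ?_) <;> ((try dsimp only); omega)
  · simp only [Finset.mem_filter, Finset.mem_univ, true_and] at hq
    have h1 := q.1.isLt
    have hmin : (⟨min (q.2 : ℕ) n, by omega⟩ : Fin (n + 1))
        = ⟨(q.2 : ℕ), by omega⟩ := Fin.ext (by (try dsimp only); omega)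
    (try dsimp only)
    rw [hmin]
    exact of_low a b c q.1 q.2 (by omega)

end KeyLemmas5

section KeyLemmas6

variable {K V : Type*} [CommRing K] [AddCommGroup V] [Module K V] {n m p : ℕ}

lemma decomp (a : MArity K V n) (b : MArity K V m) (c : MArity K V p) :
    DirectSum.of (fun k => MArity K V k) (n + m + p) (preComp (preComp a b) c)
    = Lsum a b c
      + DirectSum.of (fun k => MArity K V k) (n + (m + p)) (preComp a (preComp b c))
      + Hsum a b c := by
  have h1 : DirectSum.of (fun k => MArity K V k) (n + m + p) (preComp (preComp a b) c)
      = ∑ q : Fin (n + 1) × Fin (n + m + 1),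
          DirectSum.of (fun k => MArity K V k) (n + m + p)
            (insertComp (insertComp a b q.1) c q.2) := by
    simp only [preComp, insertComp_sum_left, map_sum]
    rw [← Finset.univ_product_univ, Finset.sum_product, Finset.sum_comm]
  rw [h1,
    ← Finset.sum_filter_add_sum_filter_not Finset.univ
      (fun q : Fin (n + 1) × Fin (n + m + 1) => (q.2 : ℕ) < (q.1 : ℕ)),
    ← Finset.sum_filter_add_sum_filter_not
      (Finset.univ.filter
        (fun q : Fin (n + 1) × Fin (n + m + 1) => ¬ (q.2 : ℕ) < (q.1 : ℕ)))
      (fun q => (q.2 : ℕ) ≤ (q.1 : ℕ) + m)]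
  have e1 : (Finset.univ.filter
        (fun q : Fin (n + 1) × Fin (n + m + 1) => ¬ (q.2 : ℕ) < (q.1 : ℕ))).filter
      (fun q => (q.2 : ℕ) ≤ (q.1 : ℕ) + m)
      = Finset.univ.filter
        (fun q : Fin (n + 1) × Fin (n + m + 1) =>
          ¬ (q.2 : ℕ) < (q.1 : ℕ) ∧ (q.2 : ℕ) ≤ (q.1 : ℕ) + m) := by
    rw [Finset.filter_filter]
  have e2 : (Finset.univ.filter
        (fun q : Fin (n + 1) × Fin (n + m + 1) => ¬ (q.2 : ℕ) < (q.1 : ℕ))).filter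
      (fun q => ¬ (q.2 : ℕ) ≤ (q.1 : ℕ) + m)
      = Finset.univ.filter
        (fun q : Fin (n + 1) × Fin (n + m + 1) => (q.1 : ℕ) + m < (q.2 : ℕ)) := by
    rw [Finset.filter_filter]
    apply Finset.filter_congr
    intro q _
    constructor <;> (intro h; omega)
  rw [e1, e2, mid_sum]
  unfold Lsum Hsum
  abel

lemma key (a : MArity K V n) (b : MArity K V m) (c : MArity K V p) :
    DirectSum.of (fun k => MArity K V k) (n + m + p) (preComp (preComp a b) c)
      + DirectSum.of (fun k => MArity K V k) (n + (p + m)) (preComp a (preComp c b))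
    = DirectSum.of (fun k => MArity K V k) (n + p + m) (preComp (preComp a c) b)
      + DirectSum.of (fun k => MArity K V k) (n + (m + p)) (preComp a (preComp b c)) := by
  rw [decomp a b c, decomp a c b, Lsum_eq_Hsum a b c, Lsum_eq_Hsum a c b]
  abel

end KeyLemmas6

section Total

variable {K V : Type*} [CommRing K] [AddCommGroup V] [Module K V]

/-- The pre-Lie product, bundled as a bilinear map into the direct sum. -/
noncomputable def preCompOf (n m : ℕ) :
    MArity K V n →ₗ[K] MArity K V m →ₗ[K] GradedEnd K V :=
  LinearMap.mk₂ K
    (fun a b => DirectSum.lof K ℕ (fun k => MArity K V k) (n + m) (preComp a b))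
    (fun a a' b => by
      simp only [preComp, insertComp_add_left, Finset.sum_add_distrib, map_add])
    (fun r a b => by
      simp only [preComp, insertComp_smul_left, ← Finset.smul_sum, map_smul])
    (fun a b b' => by
      simp only [preComp, insertComp_add_right, Finset.sum_add_distrib, map_add])
    (fun r a b => by
      simp only [preComp, insertComp_smul_right, ← Finset.smul_sum, map_smul])

noncomputable def Psi (n : ℕ) :
    GradedEnd K V →ₗ[K] MArity K V n →ₗ[K] GradedEnd K V :=
  DirectSum.toModule K ℕ _ (fun m => (preCompOf n m).flip)

/-- The pre-Lie product extended bilinearly to the direct sum. -/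
noncomputable def Phi :
    GradedEnd K V →ₗ[K] GradedEnd K V →ₗ[K] GradedEnd K V :=
  DirectSum.toModule K ℕ _ (fun n => (Psi n).flip)

lemma Phi_of_of {n m : ℕ} (a : MArity K V n) (b : MArity K V m) :
    Phi (DirectSum.of (fun k => MArity K V k) n a) (DirectSum.of (fun k => MArity K V k) m b)
      = DirectSum.of (fun k => MArity K V k) (n + m) (preComp a b) := by
  rw [← DirectSum.lof_eq_of K, ← DirectSum.lof_eq_of K, ← DirectSum.lof_eq_of K]
  show (Phi (DirectSum.lof K ℕ (fun k => MArity K V k) n a))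
      (DirectSum.lof K ℕ (fun k => MArity K V k) m b) = _
  rw [Phi, DirectSum.toModule_lof]
  show (Psi n) (DirectSum.lof K ℕ (fun k => MArity K V k) m b) a = _
  rw [Psi, DirectSum.toModule_lof]
  rfl

lemma preLie_total (x y z : GradedEnd K V) :
    Phi (Phi x y) z + Phi x (Phi z y) = Phi (Phi x z) y + Phi x (Phi y z) := by
  induction x using DirectSum.induction_on with
  | zero => simp
  | add u v hu hv =>
    simp only [map_add, LinearMap.add_apply]
    rw [add_add_add_comm, hu, hv, add_add_add_comm]
  | of n a =>
    induction y using DirectSum.induction_on with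
    | zero => simp
    | add u v hu hv =>
      simp only [map_add, LinearMap.add_apply]
      rw [add_add_add_comm, hu, hv, add_add_add_comm]
    | of m b =>
      induction z using DirectSum.induction_on with
      | zero => simp
      | add u v hu hv =>
        simp only [map_add, LinearMap.add_apply]
        rw [add_add_add_comm, hu, hv, add_add_add_comm]
      | of p c =>
        simp only [Phi_of_of]
        exact key a b c

end Total

section BracketEq

variable {K V : Type*} [CommRing K] [AddCommGroup V] [Module K V]

lemma of_bracketHomog {n m : ℕ} (a : MArity K V n) (b : MArity K V m) :
    DirectSum.of (fun k => MArity K V k) (n + m) (bracketHomog a b)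
      = DirectSum.of (fun k => MArity K V k) (n + m) (preComp a b)
        - DirectSum.of (fun k => MArity K V k) (m + n) (preComp b a) := by
  rw [bracketHomog, map_sub]
  congr 1
  exact (of_congr (by omega : m + n = n + m) (preComp b a) _ (fun v => rfl)).symm

open Classical in
lemma bracketTotal_eq (x y : GradedEnd K V) :
    bracketTotal x y = Phi x y - Phi y x := by
  classical
  have hx : ∀ w : GradedEnd K V,
      Phi (K := K) (V := V) w = ∑ i ∈ DFinsupp.support w,
        Phi (DirectSum.of (fun k => MArity K V k) i (w i)) := by
    intro w
    conv_lhs => rw [← DirectSum.sum_support_of w]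
    rw [map_sum]
  have hPhi : ∀ w u : GradedEnd K V,
      Phi w u = ∑ i ∈ DFinsupp.support w, ∑ j ∈ DFinsupp.support u,
        DirectSum.of (fun k => MArity K V k) (i + j) (preComp (w i) (u j)) := by
    intro w u
    rw [hx w, LinearMap.sum_apply]
    refine Finset.sum_congr rfl (fun i _ => ?_)
    conv_lhs => rw [← DirectSum.sum_support_of u]
    rw [map_sum]
    exact Finset.sum_congr rfl (fun j _ => Phi_of_of _ _)
  rw [bracketTotal, hPhi x y, hPhi y x]
  rw [Finset.sum_comm (s := DFinsupp.support y) (t := DFinsupp.support x)]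
  rw [DFinsupp.sum, ← Finset.sum_sub_distrib]
  refine Finset.sum_congr rfl (fun i _ => ?_)
  rw [DFinsupp.sum, ← Finset.sum_sub_distrib]
  exact Finset.sum_congr rfl (fun j _ => of_bracketHomog _ _)

end BracketEq

/-- Let `K` be a commutative ring and `V` a `K`-module.  The bracket
`[a,b] := Σ_{i=1}^{n} a∘ᵢb − Σ_{j=1}^{m} b∘ⱼa` on multilinear maps, extended bilinearly,
makes `L := ⊕_{n ≥ 1} MultilinearMap(V^n, V)` into a Lie algebra over `K`: it is
`K`-bilinear, satisfies `[x,x] = 0`, and satisfies the Jacobi identity. -/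
theorem grt_bv_stmt5 {K V : Type*} [CommRing K] [AddCommGroup V] [Module K V] :
    (∀ x y z : GradedEnd K V, bracketTotal (x + y) z = bracketTotal x z + bracketTotal y z) ∧
    (∀ x y z : GradedEnd K V, bracketTotal x (y + z) = bracketTotal x y + bracketTotal x z) ∧
    (∀ (r : K) (x y : GradedEnd K V), bracketTotal (r • x) y = r • bracketTotal x y) ∧
    (∀ (r : K) (x y : GradedEnd K V), bracketTotal x (r • y) = r • bracketTotal x y) ∧
    (∀ x : GradedEnd K V, bracketTotal x x = 0) ∧
    (∀ x y z : GradedEnd K V,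
      bracketTotal (bracketTotal x y) z + bracketTotal (bracketTotal y z) x +
        bracketTotal (bracketTotal z x) y = 0) := by
  
  refine ⟨?_, ?_, ?_, ?_, ?_, ?_⟩
  · intro x y z
    simp only [bracketTotal_eq, map_add, LinearMap.add_apply]
    abel
  · intro x y z
    simp only [bracketTotal_eq, map_add, LinearMap.add_apply]
    abel
  · intro r x y
    simp only [bracketTotal_eq, map_smul, LinearMap.smul_apply, smul_sub]
  · intro r x y
    simp only [bracketTotal_eq, map_smul, LinearMap.smul_apply, smul_sub]
  · intro x
    rw [bracketTotal_eq, sub_self]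
  · intro x y z
    have h1' : Phi (Phi x y) z + Phi x (Phi z y)
        - (Phi (Phi x z) y + Phi x (Phi y z)) = 0 := by
      rw [preLie_total x y z, sub_self]
    have h2' : Phi (Phi y z) x + Phi y (Phi x z)
        - (Phi (Phi y x) z + Phi y (Phi z x)) = 0 := by
      rw [preLie_total y z x, sub_self]
    have h3' : Phi (Phi z x) y + Phi z (Phi y x)
        - (Phi (Phi z y) x + Phi z (Phi x y)) = 0 := by
      rw [preLie_total z x y, sub_self]
    have expand : bracketTotal (bracketTotal x y) z + bracketTotal (bracketTotal y z) x
        + bracketTotal (bracketTotal z x) y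
        = (Phi (Phi x y) z + Phi x (Phi z y) - (Phi (Phi x z) y + Phi x (Phi y z)))
          + ((Phi (Phi y z) x + Phi y (Phi x z) - (Phi (Phi y x) z + Phi y (Phi z x)))
          + (Phi (Phi z x) y + Phi z (Phi y x) - (Phi (Phi z y) x + Phi z (Phi x y)))) := by
      simp only [bracketTotal_eq, map_sub, LinearMap.sub_apply]
      abel
    rw [expand, h1', h2', h3']
    simp
end
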